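/- arXiv:1501.07773 — 4 statements merged into one kernel-verified Lean document; each statement's English description precedes it below -/
import Mathlib

section
/- MacMahon's first rule: for a positive integer s, the formal power series identity Ω_≥ (1/((1 - λx)(1 - y/λ^s))) = 1/((1 - x)(1 - x^s y)) holds; concretely, the sum over all pairs (a,b) of non-negative integers with a - s·b ≥ 0 of x^a y^b equals the power series expansion of 1/((1 - x)(1 - x^s y)). -/
/-!
Multiplying by `1 - x` telescopes each row `b` of `Σ_{a ≥ s b} x^a y^b` down to its first term
`x^{s b} y^b`, leaving the boundary series `Σ_b (x^s y)^b`, which `1 - x^s y` telescopes to `1`.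
-/

/-- The generating function of all pairs `(a,b)` of non-negative integers with
`a - s·b ≥ 0`, as a formal power series in two variables. -/
def macmahon1Series (s : ℕ) : MvPowerSeries (Fin 2) ℚ :=
  fun d => if s * d 1 ≤ d 0 then 1 else 0

namespace MvPowerSeries

theorem coeff_mul_one_sub_monomial {σ R : Type*} [Ring R] (f : MvPowerSeries σ R)
    (n d : σ →₀ ℕ) (r : R) :
    coeff d (f * (1 - monomial n r)) = coeff d f - if n ≤ d then coeff (d - n) f * r else 0 := by
  rw [mul_sub, mul_one, map_sub, coeff_mul_monomial]

end MvPowerSeries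

open MvPowerSeries

def macmahon1Boundary (s : ℕ) : MvPowerSeries (Fin 2) ℚ :=
  fun d => if d 0 = s * d 1 then 1 else 0

theorem macmahon1Series_mul_one_sub_X (s : ℕ) :
    macmahon1Series s * (1 - X 0) = macmahon1Boundary s := by
  ext d
  rw [X, coeff_mul_one_sub_monomial]
  simp only [coeff_apply, macmahon1Series, macmahon1Boundary, Finsupp.le_def, Fin.forall_fin_two,
    Finsupp.single_eq_same, Finsupp.single_eq_of_ne, ne_eq, one_ne_zero, not_false_eq_true,
    zero_le, and_true, Finsupp.coe_tsub, Pi.sub_apply, tsub_zero, mul_one]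
  split_ifs <;> norm_num <;> omega

theorem macmahon1Boundary_mul_one_sub_X_pow_mul_X (s : ℕ) :
    macmahon1Boundary s * (1 - X 0 ^ s * X 1) = 1 := by
  ext d
  rw [X_pow_eq, X, monomial_mul_monomial, mul_one, coeff_mul_one_sub_monomial, coeff_one]
  simp only [coeff_apply, macmahon1Boundary, Finsupp.le_def, Finsupp.coe_add, Pi.add_apply,
    Fin.forall_fin_two, Finsupp.single_eq_same, Finsupp.single_eq_of_ne, ne_eq, zero_ne_one,
    one_ne_zero, not_false_eq_true, add_zero, zero_add, Finsupp.coe_tsub, Pi.sub_apply, mul_one,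
    Finsupp.ext_iff, Finsupp.coe_zero, Pi.zero_apply]
  generalize d 0 = a, d 1 = b
  cases b with
  | zero => simp
  | succ b =>
    simp only [Nat.add_sub_cancel, Nat.mul_succ, le_add_iff_nonneg_left, zero_le, and_true,
      Nat.add_one_ne_zero, and_false, if_false]
    rw [sub_eq_zero, ← ite_and]
    exact if_congr (by omega) rfl rfl

theorem macmahon_first_rule_general (s : ℕ) :
    macmahon1Series s *
      ((1 - MvPowerSeries.X 0) * (1 - (MvPowerSeries.X 0) ^ s * MvPowerSeries.X 1)) = 1 := by
  rw [← mul_assoc, macmahon1Series_mul_one_sub_X, macmahon1Boundary_mul_one_sub_X_pow_mul_X]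

/-- MacMahon's first rule: `Ω_≥ 1/((1-λx)(1-y/λ^s)) = 1/((1-x)(1-x^s y))`, i.e.
`Σ_{a ≥ s b} x^a y^b = 1/((1-x)(1-x^s y))` as formal power series. -/
theorem macmahon_first_rule (s : ℕ) (hs : 0 < s) :
    macmahon1Series s *
      ((1 - MvPowerSeries.X 0) * (1 - (MvPowerSeries.X 0) ^ s * MvPowerSeries.X 1)) = 1 :=
  macmahon_first_rule_general s
end

section
/- MacMahon's fourth rule: the generating function Σ over triples (a,b,c) of non-negative integers with a + b - c ≥ 0 of x^a y^b z^c equals (1 - x y z)/((1 - x)(1 - y)(1 - x z)(1 - y z)) as formal power series in ℚ[[x,y,z]]. -/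
/-!
The cone `c ≤ a + b` is not simplicial, but it splits into two simplicial pieces:
`c ≤ a`, freely generated by `x`, `y`, `xz`, and `a < c ≤ a + b`, which is `yz` times the
monoid freely generated by `y`, `xz`, `yz`. Hence the series is
`1 / ((1 - x)(1 - y)(1 - xz)) + yz / ((1 - y)(1 - xz)(1 - yz))`, whose numerator over the common
denominator is `(1 - yz) + yz (1 - x) = 1 - xyz`. Each denominator is cleared one factor at a
time: if a set `s` of exponents is stable under adding `m`, then multiplying its indicator
series by `1 - x^m` leaves the indicator series of `s` minus its translate by `m`.
-/

/-- The generating function of all triples `(a,b,c)` of non-negative integers with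
`a + b - c ≥ 0`, as a formal power series in three variables. -/
def macmahon4Series : MvPowerSeries (Fin 3) ℚ :=
  fun d => if d 2 ≤ d 0 + d 1 then 1 else 0

theorem Set.mem_image_add_right_iff {α : Type*} [AddCommMonoid α] [PartialOrder α]
    [CanonicallyOrderedAdd α] [Sub α] [OrderedSub α] [AddLeftReflectLE α]
    {s : Set α} {m d : α} :
    d ∈ (· + m) '' s ↔ m ≤ d ∧ d - m ∈ s := by
  constructor
  · rintro ⟨e, he, rfl⟩
    exact ⟨le_add_self, by rwa [add_tsub_cancel_right]⟩
  · rintro ⟨hle, hmem⟩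
    exact ⟨d - m, hmem, tsub_add_cancel_of_le hle⟩

namespace MvPowerSeries

open Set Finsupp

section Indicator

variable {σ R : Type*}

open scoped Classical in
noncomputable def indicator [Semiring R] (s : Set (σ →₀ ℕ)) : MvPowerSeries σ R :=
  fun d => if d ∈ s then 1 else 0

open scoped Classical in
theorem coeff_indicator [Semiring R] (s : Set (σ →₀ ℕ)) (d : σ →₀ ℕ) :
    coeff d (indicator s : MvPowerSeries σ R) = if d ∈ s then 1 else 0 :=
  rfl

theorem indicator_union_of_disjoint [Semiring R] {s t : Set (σ →₀ ℕ)} (h : Disjoint s t) :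
    (indicator (s ∪ t) : MvPowerSeries σ R) = indicator s + indicator t := by
  ext d
  have := Set.disjoint_left.mp h
  by_cases hs : d ∈ s <;> by_cases ht : d ∈ t <;> simp_all [coeff_indicator]

theorem indicator_singleton [Semiring R] (m : σ →₀ ℕ) :
    (indicator {m} : MvPowerSeries σ R) = monomial m 1 := by
  classical
  ext d
  simp [coeff_indicator, coeff_monomial]

theorem indicator_mul_one_sub_monomial [Ring R] {s : Set (σ →₀ ℕ)} {m : σ →₀ ℕ}
    (hs : MapsTo (· + m) s s) :
    (indicator s : MvPowerSeries σ R) * (1 - monomial m 1) = indicator (s \ (· + m) '' s) := by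
  ext d
  have hsub : m ≤ d → d - m ∈ s → d ∈ s := fun hle hmem =>
    hs.image_subset (mem_image_add_right_iff.mpr ⟨hle, hmem⟩)
  rw [mul_sub, mul_one, map_sub, coeff_mul_monomial, coeff_indicator, coeff_indicator,
    coeff_indicator, mem_sdiff, mem_image_add_right_iff]
  by_cases hle : m ≤ d <;> by_cases hmem : d - m ∈ s <;> by_cases hd : d ∈ s <;> simp_all

theorem X_mul_X_eq_monomial [Semiring R] (i j : σ) :
    (X i * X j : MvPowerSeries σ R) = monomial (single i 1 + single j 1) 1 := by
  rw [X_def, X_def, monomial_mul_monomial, one_mul]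

end Indicator

end MvPowerSeries

namespace MacMahon4

open MvPowerSeries

def lowerCone : Set (Fin 3 →₀ ℕ) := {d | d 2 ≤ d 0}

def upperCone : Set (Fin 3 →₀ ℕ) := {d | d 0 < d 2 ∧ d 2 ≤ d 0 + d 1}

variable {R : Type*} [Ring R]

theorem indicator_lowerCone_mul :
    (indicator lowerCone : MvPowerSeries (Fin 3) R) * (1 - X 0 * X 2) * (1 - X 0) *
      (1 - X 1) = 1 := by
  have h₁ : (indicator lowerCone : MvPowerSeries (Fin 3) R) * (1 - X 0 * X 2) =
      indicator {d | d 2 = 0} := by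
    rw [X_mul_X_eq_monomial,
      indicator_mul_one_sub_monomial (fun d hd => by simp_all [lowerCone])]
    congr 1; ext d
    simp [-Set.mem_image, Set.mem_image_add_right_iff, lowerCone, Finsupp.le_def,
      Fin.forall_fin_succ, Finsupp.single_apply]
    omega
  have h₂ : (indicator {d | d 2 = 0} : MvPowerSeries (Fin 3) R) * (1 - X 0) =
      indicator {d | d 0 = 0 ∧ d 2 = 0} := by
    rw [X_def, indicator_mul_one_sub_monomial (fun d hd => by simp_all)]
    congr 1; ext d
    simp [-Set.mem_image, Set.mem_image_add_right_iff, Finsupp.le_def, Fin.forall_fin_succ,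
      Finsupp.single_apply]
    omega
  have h₃ : (indicator {d | d 0 = 0 ∧ d 2 = 0} : MvPowerSeries (Fin 3) R) * (1 - X 1) =
      indicator {0} := by
    rw [X_def, indicator_mul_one_sub_monomial (fun d hd => by simp_all)]
    congr 1; ext d
    simp [-Set.mem_image, Set.mem_image_add_right_iff, Finsupp.le_def, Fin.forall_fin_succ,
      Finsupp.single_apply, Finsupp.ext_iff]
    omega
  rw [h₁, h₂, h₃, indicator_singleton, monomial_zero_one]

theorem indicator_upperCone_mul :
    (indicator upperCone : MvPowerSeries (Fin 3) R) * (1 - X 1 * X 2) *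
      (1 - X 0 * X 2) * (1 - X 1) = X 1 * X 2 := by
  have h₁ : (indicator upperCone : MvPowerSeries (Fin 3) R) * (1 - X 1 * X 2) =
      indicator {d | d 2 = d 0 + 1 ∧ 1 ≤ d 1} := by
    rw [X_mul_X_eq_monomial,
      indicator_mul_one_sub_monomial (fun d hd => by simp_all [upperCone]; omega)]
    congr 1; ext d
    simp [-Set.mem_image, Set.mem_image_add_right_iff, upperCone, Finsupp.le_def,
      Fin.forall_fin_succ, Finsupp.single_apply]
    omega
  have h₂ : (indicator {d | d 2 = d 0 + 1 ∧ 1 ≤ d 1} : MvPowerSeries (Fin 3) R) *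
      (1 - X 0 * X 2) = indicator {d | d 0 = 0 ∧ d 2 = 1 ∧ 1 ≤ d 1} := by
    rw [X_mul_X_eq_monomial, indicator_mul_one_sub_monomial (fun d hd => by simp_all)]
    congr 1; ext d
    simp [-Set.mem_image, Set.mem_image_add_right_iff, Finsupp.le_def, Fin.forall_fin_succ,
      Finsupp.single_apply]
    omega
  have h₃ : (indicator {d | d 0 = 0 ∧ d 2 = 1 ∧ 1 ≤ d 1} : MvPowerSeries (Fin 3) R) *
      (1 - X 1) = indicator {Finsupp.single 1 1 + Finsupp.single 2 1} := by
    rw [X_def, indicator_mul_one_sub_monomial (fun d hd => by simp_all)]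
    congr 1; ext d
    simp [-Set.mem_image, Set.mem_image_add_right_iff, Finsupp.le_def, Fin.forall_fin_succ,
      Finsupp.single_apply, Finsupp.ext_iff]
    omega
  rw [h₁, h₂, h₃, indicator_singleton, X_mul_X_eq_monomial]

theorem macmahon4Series_eq_indicator : macmahon4Series = indicator (lowerCone ∪ upperCone) := by
  ext d
  rw [coeff_indicator]
  simp only [macmahon4Series, coeff_apply, lowerCone, upperCone, Set.mem_union, Set.mem_ofPred_eq]
  exact if_congr (by omega) rfl rfl

theorem disjoint_lowerCone_upperCone : Disjoint lowerCone upperCone :=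
  Set.disjoint_left.mpr fun d h₁ h₂ => by simp_all [lowerCone, upperCone]; omega

end MacMahon4

open MacMahon4 MvPowerSeries

/-- MacMahon's fourth rule: `Σ_{a+b≥c} x^a y^b z^c
  = (1 - xyz)/((1-x)(1-y)(1-xz)(1-yz))` as formal power series. -/
theorem macmahon_fourth_rule :
    macmahon4Series *
      ((1 - MvPowerSeries.X 0) * (1 - MvPowerSeries.X 1) *
       (1 - MvPowerSeries.X 0 * MvPowerSeries.X 2) *
       (1 - MvPowerSeries.X 1 * MvPowerSeries.X 2)) =
    1 - MvPowerSeries.X 0 * MvPowerSeries.X 1 * MvPowerSeries.X 2 := by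
  rw [macmahon4Series_eq_indicator, indicator_union_of_disjoint disjoint_lowerCone_upperCone]
  linear_combination (1 - X 1 * X 2) * indicator_lowerCone_mul (R := ℚ) +
    (1 - X 0) * indicator_upperCone_mul (R := ℚ)
end

section
/- Let V ∈ ℤ^{n×n} be invertible with Smith normal form V = U S W, where U, W ∈ ℤ^{n×n} are unimodular and S is diagonal with positive diagonal entries s₁ | s₂ | ... | s_n. Then the map x ↦ V·fract(V^{-1} U x) is a bijection from the box {0,...,s₁-1} × ... × {0,...,s_n-1} onto the set of lattice points ℤ^n ∩ Π(V) in the half-open fundamental parallelepiped of V. -/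
open Matrix

section Aux

variable {n : ℕ}

lemma snf_cast_mulVec (A : Matrix (Fin n) (Fin n) ℤ) (v : Fin n → ℤ) :
    (A.map ((↑) : ℤ → ℚ)).mulVec (fun j => (v j : ℚ)) = fun i => ((A.mulVec v) i : ℚ) := by
  funext i
  simp [Matrix.mulVec, dotProduct, Matrix.map_apply]

lemma snf_mulVec_cancel {A : Matrix (Fin n) (Fin n) ℚ} (hA : IsUnit A.det)
    {a b : Fin n → ℚ} (h : A.mulVec a = A.mulVec b) : a = b := by
  have h2 := congrArg (fun v => A⁻¹.mulVec v) h
  simpa [Matrix.mulVec_mulVec, Matrix.nonsing_inv_mul _ hA, Matrix.one_mulVec] using h2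

end Aux

/-- Smith normal form parametrization of the lattice points in the fundamental
parallelepiped: if `V = U S W` with `U, W` unimodular and `S` diagonal with positive
divisibility-chain entries `s₁ | … | s_n`, then `x ↦ V·fract(V⁻¹ U x)` is a bijection
from the box `{0,…,s₁-1} × … × {0,…,s_n-1}` onto `ℤ^n ∩ Π(V)`. -/
theorem smith_normal_form_parametrization (n : ℕ)
    (V U S W : Matrix (Fin n) (Fin n) ℤ) (s : Fin n → ℤ)
    (hU : IsUnit U.det) (hW : IsUnit W.det)
    (hS : S = Matrix.diagonal s) (hs : ∀ i, 0 < s i)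
    (hdvd : ∀ i j : Fin n, i ≤ j → s i ∣ s j)
    (hV : V = U * S * W) :
    let Vq := V.map ((↑) : ℤ → ℚ)
    let Uq := U.map ((↑) : ℤ → ℚ)
    Set.BijOn
      (fun x : Fin n → ℤ => Vq.mulVec (fun i =>
        Int.fract ((Vq⁻¹.mulVec (Uq.mulVec (fun j => (x j : ℚ)))) i)))
      {x : Fin n → ℤ | ∀ i, 0 ≤ x i ∧ x i < s i}
      {y : Fin n → ℚ | (∀ i, ∃ z : ℤ, y i = (z : ℚ)) ∧
        ∃ lam : Fin n → ℚ, (∀ i, 0 ≤ lam i ∧ lam i < 1) ∧ y = Vq.mulVec lam} := by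
  intro Vq Uq
  -- determinants
  have hsne : ∀ i, s i ≠ 0 := fun i => (hs i).ne'
  have hVdet : V.det ≠ 0 := by
    rw [hV, Matrix.det_mul, Matrix.det_mul, hS, Matrix.det_diagonal]
    have h1 : U.det ≠ 0 := hU.ne_zero
    have h2 : W.det ≠ 0 := hW.ne_zero
    have h3 : (∏ i, s i) ≠ 0 := Finset.prod_ne_zero_iff.mpr (fun i _ => hsne i)
    exact mul_ne_zero (mul_ne_zero h1 h3) h2
  have hVqdet : IsUnit Vq.det := by
    have : Vq.det = ((V.det : ℤ) : ℚ) := by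
      show (((Int.castRingHom ℚ).mapMatrix V).det) = _
      rw [← RingHom.map_det]
      rfl
    rw [this]
    exact isUnit_iff_ne_zero.mpr (by exact_mod_cast hVdet)
  have hUqdet : IsUnit Uq.det := by
    have : Uq.det = ((U.det : ℤ) : ℚ) := by
      show (((Int.castRingHom ℚ).mapMatrix U).det) = _
      rw [← RingHom.map_det]
      rfl
    rw [this]
    exact isUnit_iff_ne_zero.mpr (by exact_mod_cast hU.ne_zero)
  -- basic inverse identities
  have hVVinv : Vq * Vq⁻¹ = 1 := Matrix.mul_nonsing_inv _ hVqdet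
  have hVinvV : Vq⁻¹ * Vq = 1 := Matrix.nonsing_inv_mul _ hVqdet
  have hVmul : ∀ v : Fin n → ℚ, Vq.mulVec (Vq⁻¹.mulVec v) = v := by
    intro v; rw [Matrix.mulVec_mulVec, hVVinv, Matrix.one_mulVec]
  have hVinvmul : ∀ v : Fin n → ℚ, Vq⁻¹.mulVec (Vq.mulVec v) = v := by
    intro v; rw [Matrix.mulVec_mulVec, hVinvV, Matrix.one_mulVec]
  -- notation
  set c : (Fin n → ℤ) → (Fin n → ℚ) :=
    fun x => Vq⁻¹.mulVec (Uq.mulVec (fun j => (x j : ℚ))) with hc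
  set f : (Fin n → ℤ) → (Fin n → ℚ) :=
    fun x => Vq.mulVec (fun i => Int.fract (c x i)) with hf
  -- the key formula : f x = cast of (U x - V ⌊c x⌋)
  have hfval : ∀ x : Fin n → ℤ,
      f x = fun i => (((U.mulVec x - V.mulVec (fun j => ⌊c x j⌋)) i : ℤ) : ℚ) := by
    intro x
    have h1 : (fun i => Int.fract (c x i))
        = c x - fun i => ((⌊c x i⌋ : ℤ) : ℚ) := by
      funext i
      rw [Pi.sub_apply]
      exact (Int.self_sub_floor _).symm
    rw [hf]
    show Vq.mulVec (fun i => Int.fract (c x i)) = _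
    rw [h1, Matrix.mulVec_sub, hVmul]
    funext i
    have h2 : Vq.mulVec (fun i => ((⌊c x i⌋ : ℤ) : ℚ))
        = fun i => ((V.mulVec (fun j => ⌊c x j⌋)) i : ℚ) := snf_cast_mulVec V _
    have h3 : Uq.mulVec (fun j => ((x j : ℤ) : ℚ)) = fun i => ((U.mulVec x) i : ℚ) :=
      snf_cast_mulVec U x
    rw [h2, h3]
    simp only [Pi.sub_apply, Int.cast_sub]
  constructor
  · -- MapsTo
    intro x _
    refine ⟨?_, ⟨fun i => Int.fract (c x i), fun i => ⟨Int.fract_nonneg _, Int.fract_lt_one _⟩, rfl⟩⟩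
    intro i
    refine ⟨(U.mulVec x - V.mulVec (fun j => ⌊c x j⌋)) i, ?_⟩
    have := congrFun (hfval x) i
    exact this
  constructor
  · -- InjOn
    intro x₁ hx₁ x₂ hx₂ hfx
    have hcc : ∀ i, Int.fract (c x₁ i) = Int.fract (c x₂ i) := by
      have := snf_mulVec_cancel hVqdet hfx
      intro i; exact congrFun this i
    -- c x₁ - c x₂ is an integer vector k
    set k : Fin n → ℤ := fun i => ⌊c x₁ i⌋ - ⌊c x₂ i⌋ with hk
    have hck : ∀ i, c x₁ i - c x₂ i = (k i : ℚ) := by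
      intro i
      have h1 : c x₁ i - ⌊c x₁ i⌋ = c x₂ i - ⌊c x₂ i⌋ := by
        rw [Int.self_sub_floor, Int.self_sub_floor]; exact hcc i
      simp only [hk]
      push_cast
      linarith
    -- Uq (x₁ - x₂) = Vq k
    have hUeq : Uq.mulVec ((fun j => ((x₁ j : ℚ))) - fun j => ((x₂ j : ℚ)))
        = Vq.mulVec (fun i => (k i : ℚ)) := by
      have h1 : c x₁ - c x₂ = fun i => (k i : ℚ) := funext hck
      have h2 : Vq.mulVec (c x₁ - c x₂) = Vq.mulVec (fun i => (k i : ℚ)) := by rw [h1]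
      rw [Matrix.mulVec_sub] at h2
      rw [hc] at h2
      simp only [hVmul] at h2
      rw [Matrix.mulVec_sub]
      exact h2
    -- cancel Uq : x₁ - x₂ = (S*W) k  (over ℚ, hence over ℤ)
    have hVqfact : Vq = Uq * ((S*W).map ((↑) : ℤ → ℚ)) := by
      show V.map (Int.castRingHom ℚ) = U.map (Int.castRingHom ℚ) * ((S*W).map (Int.castRingHom ℚ))
      rw [hV, ← Matrix.map_mul, mul_assoc]
    have hcancel : ((fun j => ((x₁ j : ℚ))) - fun j => ((x₂ j : ℚ)))
        = ((S*W).map ((↑) : ℤ → ℚ)).mulVec (fun i => (k i : ℚ)) := by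
      apply snf_mulVec_cancel hUqdet
      rw [hUeq, hVqfact, ← Matrix.mulVec_mulVec]
    have hdiff : ∀ i, x₁ i - x₂ i = ((S*W).mulVec k) i := by
      intro i
      have h1 := congrFun hcancel i
      rw [snf_cast_mulVec (S*W) k] at h1
      have : ((x₁ i : ℚ)) - (x₂ i : ℚ) = (((S*W).mulVec k) i : ℚ) := h1
      exact_mod_cast this
    funext i
    have hdvd2 : s i ∣ x₁ i - x₂ i := by
      rw [hdiff i, ← Matrix.mulVec_mulVec, hS, Matrix.mulVec_diagonal]
      exact Dvd.intro _ rfl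
    have hb1 := hx₁ i
    have hb2 := hx₂ i
    have habs : |x₁ i - x₂ i| < s i := by
      rw [abs_sub_lt_iff]; omega
    have := Int.eq_zero_of_abs_lt_dvd hdvd2 habs
    omega
  · -- SurjOn
    intro y hy
    obtain ⟨hyint, lam, hlam, hylam⟩ := hy
    choose zvec hzvec using hyint
    -- integer inverses of U and W
    have hUU : U * U⁻¹ = 1 := Matrix.mul_nonsing_inv _ hU
    have hWW : W * W⁻¹ = 1 := Matrix.mul_nonsing_inv _ hW
    set t : Fin n → ℤ := U⁻¹.mulVec zvec with ht
    set x : Fin n → ℤ := fun i => t i % s i with hxdef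
    set q : Fin n → ℤ := fun i => t i / s i with hq
    set m : Fin n → ℤ := W⁻¹.mulVec q with hm
    refine ⟨x, ?_, ?_⟩
    · intro i
      exact ⟨Int.emod_nonneg _ (hsne i), Int.emod_lt_of_pos _ (hs i)⟩
    · -- f x = y
      show f x = y
      -- U x = zvec - V m  over ℤ
      have hxt : x = t - S.mulVec q := by
        funext i
        rw [Pi.sub_apply, hS, Matrix.mulVec_diagonal]
        show t i % s i = t i - s i * (t i / s i)
        have := Int.mul_ediv_add_emod (t i) (s i)
        omega
      have hUt : U.mulVec t = zvec := by
        rw [ht, Matrix.mulVec_mulVec, hUU, Matrix.one_mulVec]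
      have hWm : W.mulVec m = q := by
        rw [hm, Matrix.mulVec_mulVec, hWW, Matrix.one_mulVec]
      have hUx : U.mulVec x = zvec - V.mulVec m := by
        rw [hxt, Matrix.mulVec_sub, hUt, hV, ← Matrix.mulVec_mulVec, hWm,
          ← Matrix.mulVec_mulVec]
      -- now compute c x = lam - m
      have hyz : y = fun i => ((zvec i : ℤ) : ℚ) := funext hzvec
      have hcx : c x = fun i => lam i - (m i : ℚ) := by
        rw [hc]
        show Vq⁻¹.mulVec (Uq.mulVec fun j => ((x j : ℚ))) = _
        rw [snf_cast_mulVec U x, hUx]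
        have h1 : (fun i => (((zvec - V.mulVec m) i : ℤ) : ℚ))
            = (fun i => ((zvec i : ℤ) : ℚ)) - Vq.mulVec (fun i => (m i : ℚ)) := by
          rw [snf_cast_mulVec V m]
          funext i
          simp only [Pi.sub_apply, Int.cast_sub]
        rw [h1, ← hyz, hylam, Matrix.mulVec_sub, hVinvmul, hVinvmul]
        rfl
      have hfract : (fun i => Int.fract (c x i)) = lam := by
        funext i
        rw [hcx]
        show Int.fract (lam i - (m i : ℚ)) = lam i
        rw [Int.fract_sub_intCast]
        exact Int.fract_eq_self.mpr (hlam i)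
      rw [hf]
      show Vq.mulVec (fun i => Int.fract (c x i)) = y
      rw [hfract, ← hylam]
end

section
/- Let Ã ∈ ℤ^{d×d} be an invertible integer matrix whose entries are bounded in absolute value by a ≥ 1, and let V be the integer matrix whose columns are the primitive integer vectors on the rays of the columns of Ã^{-1} (i.e., V = prim(Ã^{-1}) columnwise). Then |det(V)| ≤ |det(Ã)|^{d-1} ≤ (d·a)^{d(d-1)}; in particular |det(V)| ≤ (d·a)^{d²}. -/
/-- If `w = s • v` over `ℚ` with `v` a primitive integer vector and `w` an integer
vector, then the scalar is actually an integer. -/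
lemma exists_int_scalar_of_gcd_eq_one {d : ℕ} (v w : Fin d → ℤ) (s : ℚ)
    (hg : Finset.univ.gcd v = 1) (h : ∀ j, (w j : ℚ) = s * v j) :
    ∃ c : ℤ, ∀ j, w j = c * v j := by
  have key : ∀ j, (s.den : ℤ) * w j = s.num * v j := by
    intro j
    have : ((s.den : ℤ) * w j : ℚ) = ((s.num * v j : ℤ) : ℚ) := by
      push_cast
      rw [h j]
      rw [show (s.den : ℚ) * (s * v j) = s * s.den * v j by ring, Rat.mul_den_eq_num]
    exact_mod_cast this
  have hcop : IsCoprime (s.den : ℤ) s.num := by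
    rw [Int.isCoprime_iff_gcd_eq_one, Int.gcd]
    simpa [Nat.coprime_comm] using s.reduced.symm
  have hdvd : (s.den : ℤ) ∣ 1 := by
    rw [← hg]
    refine Finset.dvd_gcd fun j _ => ?_
    exact hcop.dvd_of_dvd_mul_left ⟨w j, (key j).symm⟩
  have hden : (s.den : ℤ) = 1 := Int.eq_one_of_dvd_one (by positivity) hdvd
  exact ⟨s.num, fun j => by have := key j; rw [hden, one_mul] at this; exact this⟩

/-- Bound on the determinant of the primitivized inverse: if `Ã` is an invertible
integer matrix with entries bounded by `a` and the columns of `V` are the primitive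
integer vectors on the rays of the columns of `Ã⁻¹`, then
`|det V| ≤ |det Ã|^(d-1) ≤ (d·a)^(d(d-1)) ≤ (d·a)^(d²)`. -/
theorem det_prim_inverse_bound (d a : ℕ) (ha : 1 ≤ a)
    (Atil : Matrix (Fin d) (Fin d) ℤ) (hdet : Atil.det ≠ 0)
    (hbnd : ∀ i j, (Atil i j).natAbs ≤ a)
    (V : Matrix (Fin d) (Fin d) ℤ)
    (hV : ∀ i : Fin d, Finset.univ.gcd (fun j => V j i) = 1 ∧
      ∃ t : ℚ, 0 < t ∧ ∀ j, (V j i : ℚ) = t * (Atil.map ((↑) : ℤ → ℚ))⁻¹ j i) :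
    V.det.natAbs ≤ Atil.det.natAbs ^ (d - 1) ∧
    Atil.det.natAbs ^ (d - 1) ≤ (d * a) ^ (d * (d - 1)) ∧
    V.det.natAbs ≤ (d * a) ^ (d ^ 2) := by
  set Aq : Matrix (Fin d) (Fin d) ℚ := Atil.map ((↑) : ℤ → ℚ) with hAq
  have hmap : Aq = (Int.castRingHom ℚ).mapMatrix Atil := rfl
  have hdetq : Aq.det = (Atil.det : ℚ) := by
    rw [hmap, ← RingHom.map_det]; rfl
  have hdetq0 : Aq.det ≠ 0 := by
    rw [hdetq]; exact_mod_cast hdet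
  -- each column of the adjugate is an integer multiple of the column of V
  have hcol : ∀ i : Fin d, ∃ c : ℤ, ∀ j, Atil.adjugate j i = c * V j i := by
    intro i
    obtain ⟨hg, t, ht, hVt⟩ := hV i
    refine exists_int_scalar_of_gcd_eq_one (fun j => V j i) (fun j => Atil.adjugate j i)
      (Aq.det / t) hg fun j => ?_
    have hinv : Aq⁻¹ j i = (Aq.det)⁻¹ * Atil.adjugate j i := by
      rw [Matrix.inv_def, Ring.inverse_eq_inv]
      have : Aq.adjugate j i = ((Atil.adjugate j i : ℤ) : ℚ) := by
        rw [hmap, ← RingHom.map_adjugate]; rfl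
      simp [Matrix.smul_apply, this]
    have := hVt j
    rw [hinv] at this
    field_simp at this ⊢
    linarith [this]
  choose c hc using hcol
  have hAdj : Atil.adjugate = V * Matrix.diagonal c := by
    ext j i
    rw [Matrix.mul_diagonal, mul_comm]
    exact hc i j
  have hdetAdj : Atil.det ^ (d - 1) = V.det * ∏ i, c i := by
    have hda := Matrix.det_adjugate Atil
    rw [Fintype.card_fin] at hda
    rw [← hda, hAdj, Matrix.det_mul, Matrix.det_diagonal]
  have hprod0 : (∏ i, c i) ≠ 0 := by
    intro h0
    exact pow_ne_zero (d - 1) hdet (by rw [hdetAdj, h0, mul_zero])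
  have h1 : V.det.natAbs ≤ Atil.det.natAbs ^ (d - 1) := by
    have : Atil.det.natAbs ^ (d - 1) = V.det.natAbs * (∏ i, c i).natAbs := by
      rw [← Int.natAbs_pow, hdetAdj, Int.natAbs_mul]
    rw [this]
    exact Nat.le_mul_of_pos_right _ (Int.natAbs_pos.mpr hprod0)
  -- Hadamard-type bound
  have hH : Atil.det.natAbs ≤ (d * a) ^ d := by
    calc Atil.det.natAbs
        = (∑ σ : Equiv.Perm (Fin d), Equiv.Perm.sign σ • ∏ i, Atil (σ i) i).natAbs := by
          rw [Matrix.det_apply]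
      _ ≤ ∑ σ : Equiv.Perm (Fin d), (Equiv.Perm.sign σ • ∏ i, Atil (σ i) i).natAbs :=
          nat_abs_sum_le _ _
      _ ≤ ∑ _σ : Equiv.Perm (Fin d), a ^ d := by
          refine Finset.sum_le_sum fun σ _ => ?_
          rw [Units.smul_def, smul_eq_mul, Int.natAbs_mul, Int.units_natAbs, one_mul]
          calc (∏ i, Atil (σ i) i).natAbs = ∏ i, (Atil (σ i) i).natAbs :=
                map_prod Int.natAbsHom _ _
            _ ≤ ∏ _i : Fin d, a := Finset.prod_le_prod (fun _ _ => Nat.zero_le _)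
                (fun i _ => hbnd (σ i) i)
            _ = a ^ d := by simp
      _ = d.factorial * a ^ d := by simp [Fintype.card_perm]
      _ ≤ d ^ d * a ^ d := Nat.mul_le_mul_right _ d.factorial_le_pow
      _ = (d * a) ^ d := (mul_pow d a d).symm
  have h2 : Atil.det.natAbs ^ (d - 1) ≤ (d * a) ^ (d * (d - 1)) := by
    calc Atil.det.natAbs ^ (d - 1) ≤ ((d * a) ^ d) ^ (d - 1) :=
          Nat.pow_le_pow_left hH _
      _ = (d * a) ^ (d * (d - 1)) := by rw [← pow_mul]
  have h3 : (d * a) ^ (d * (d - 1)) ≤ (d * a) ^ (d ^ 2) := by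
    rcases Nat.eq_zero_or_pos d with hd | hd
    · subst hd; simp
    · exact Nat.pow_le_pow_right (Nat.one_le_iff_ne_zero.mpr (by positivity))
        (by nlinarith [Nat.sub_le d 1])
  exact ⟨h1, h2, le_trans h1 (le_trans h2 h3)⟩
end
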